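/- arXiv:1308.3589 — 3 statements merged into one kernel-verified Lean document; each statement's English description precedes it below -/
import Mathlib

section
/- Let B be a bialgebra over a field k of characteristic zero, A a left B-module algebra (i.e., a unital associative algebra with B-linear multiplication and with b·1_A = ε(b)1_A), and F ∈ B ⊗ B a twisting element, meaning [(Δ⊗id)(F)](F⊗1) = [(id⊗Δ)(F)](1⊗F) and (ε⊗id)(F) = 1 = (id⊗ε)(F). Then the operation a * b := μ_A(F(a⊗b)), where F acts on A⊗A via the B⊗B-module structure, defines an associative unital multiplication on A with the same unit 1_A. -/
open TensorProduct Coalgebra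

section Prelude

variable (R : Type*) [CommRing R]
variable (B : Type*) [Ring B] [Bialgebra R B]
variable (A : Type*) [Ring A] [Algebra R A]

/-- The action of `B ⊗ B` on `A ⊗ A` induced by a representation `ρ : B → End A`. -/
noncomputable def act2 (ρ : B →ₐ[R] Module.End R A) :
    B ⊗[R] B →ₗ[R] (A ⊗[R] A) →ₗ[R] A ⊗[R] A :=
  TensorProduct.homTensorHomMap (RingHom.id R) A A A A ∘ₗ TensorProduct.map ρ.toLinearMap ρ.toLinearMap

/-- `A` is a left `B`-module algebra via `ρ`: the multiplication of `A` is `B`-linear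
(with respect to the diagonal action on `A ⊗ A`), and `b • 1 = ε(b) • 1`. -/
def IsModuleAlgebra (ρ : B →ₐ[R] Module.End R A) : Prop :=
  (∀ b : B, (ρ b) ∘ₗ LinearMap.mul' R A =
      LinearMap.mul' R A ∘ₗ act2 R B A ρ (Coalgebra.comul b)) ∧
  (∀ b : B, ρ b 1 = Coalgebra.counit (R := R) b • (1 : A))

/-- `F ∈ B ⊗ B` is a twisting element: `[(Δ⊗id)F](F⊗1) = [(id⊗Δ)F](1⊗F)` and
`(ε⊗id)F = 1 = (id⊗ε)F`. -/
def IsTwisting (F : B ⊗[R] B) : Prop :=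
  (TensorProduct.map Coalgebra.comul LinearMap.id F) * (F ⊗ₜ[R] (1 : B)) =
    (TensorProduct.assoc R B B B).symm
      ((TensorProduct.map LinearMap.id Coalgebra.comul F) * ((1 : B) ⊗ₜ[R] F)) ∧
  TensorProduct.lid R B (TensorProduct.map Coalgebra.counit LinearMap.id F) = 1 ∧
  TensorProduct.rid R B (TensorProduct.map LinearMap.id Coalgebra.counit F) = 1

/-- The multiplication twisted by `F`: `a * b := μ_A (F (a ⊗ b))`. -/
noncomputable def twMul (ρ : B →ₐ[R] Module.End R A) (F : B ⊗[R] B) (a b : A) : A :=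
  LinearMap.mul' R A (act2 R B A ρ F (a ⊗ₜ[R] b))

end Prelude

/-!
Because the multiplication of `A` is `B`-linear, `F` acting after `μ ⊗ id` equals `(μ ⊗ id)`
after `(Δ ⊗ id)(F)`, so `(a * b) * c = μ (μ ⊗ id) ([(Δ ⊗ id)F](F ⊗ 1) (a ⊗ b ⊗ c))`, and
symmetrically `a * (b * c) = μ (id ⊗ μ) ([(id ⊗ Δ)F](1 ⊗ F) (a ⊗ b ⊗ c))`. The twisting identity
and the associativity of `μ` identify the two. For the unit, `b • 1 = ε(b) • 1` turns `1 * a`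
into `((ε ⊗ id)F) • a = a`, and likewise on the right.
-/

section TensorAction

variable {R : Type*} [CommSemiring R] {B C D M N P : Type*}
  [Semiring B] [Algebra R B] [Semiring C] [Algebra R C] [Semiring D] [Algebra R D]
  [AddCommMonoid M] [Module R M] [AddCommMonoid N] [Module R N] [AddCommMonoid P] [Module R P]

noncomputable def tensorAction (ρ : B →ₐ[R] Module.End R M) (σ : C →ₐ[R] Module.End R N) :
    B ⊗[R] C →ₐ[R] Module.End R (M ⊗[R] N) :=
  Module.endTensorEndAlgHom.comp (Algebra.TensorProduct.map ρ σ)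

@[simp]
lemma tensorAction_tmul (ρ : B →ₐ[R] Module.End R M) (σ : C →ₐ[R] Module.End R N)
    (b : B) (c : C) : tensorAction ρ σ (b ⊗ₜ c) = map (ρ b) (σ c) :=
  rfl

lemma assoc_comp_tensorAction_assoc_symm (ρ : B →ₐ[R] Module.End R M)
    (σ : C →ₐ[R] Module.End R N) (τ : D →ₐ[R] Module.End R P) (u : B ⊗[R] (C ⊗[R] D)) :
    (TensorProduct.assoc R M N P).toLinearMap ∘ₗ
        tensorAction (tensorAction ρ σ) τ ((TensorProduct.assoc R B C D).symm u) =
      tensorAction ρ (tensorAction σ τ) u ∘ₗ (TensorProduct.assoc R M N P).toLinearMap := by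
  induction u using TensorProduct.induction_on with
  | zero => simp
  | tmul b y =>
    induction y using TensorProduct.induction_on with
    | zero => simp
    | tmul c d => exact (map_map_comp_assoc_eq (ρ b) (σ c) (τ d)).symm
    | add y z hy hz => simp only [tmul_add, map_add, LinearMap.comp_add, LinearMap.add_comp, hy, hz]
  | add u v hu hv => simp only [map_add, LinearMap.comp_add, LinearMap.add_comp, hu, hv]

end TensorAction

lemma LinearMap.mul'_comp_map_mul'_id {R A : Type*} [CommSemiring R] [Semiring A] [Algebra R A] :
    mul' R A ∘ₗ map (mul' R A) LinearMap.id =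
      mul' R A ∘ₗ map LinearMap.id (mul' R A) ∘ₗ (TensorProduct.assoc R A A A).toLinearMap :=
  TensorProduct.ext_threefold fun a b c => by simp [mul_assoc]

lemma mul'_comp_map_mul'_id_comp_tensorAction_assoc_symm {R A B : Type*} [CommSemiring R]
    [Semiring A] [Algebra R A] [Semiring B] [Algebra R B] (ρ : B →ₐ[R] Module.End R A)
    (u : B ⊗[R] (B ⊗[R] B)) :
    LinearMap.mul' R A ∘ₗ map (LinearMap.mul' R A) LinearMap.id ∘ₗ
        tensorAction (tensorAction ρ ρ) ρ ((TensorProduct.assoc R B B B).symm u) =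
      LinearMap.mul' R A ∘ₗ map LinearMap.id (LinearMap.mul' R A) ∘ₗ
        tensorAction ρ (tensorAction ρ ρ) u ∘ₗ (TensorProduct.assoc R A A A).toLinearMap := by
  rw [← LinearMap.comp_assoc, LinearMap.mul'_comp_map_mul'_id, LinearMap.comp_assoc,
    LinearMap.comp_assoc, assoc_comp_tensorAction_assoc_symm]

section ModuleAlgebra

variable {R : Type*} [CommRing R] {B : Type*} [Ring B] [Bialgebra R B]
  {A : Type*} [Ring A] [Algebra R A] {ρ : B →ₐ[R] Module.End R A}

lemma act2_apply (x : B ⊗[R] B) :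
    act2 R B A ρ x = tensorAction ρ ρ x := by
  induction x using TensorProduct.induction_on with
  | zero => simp
  | tmul b b' => simp [act2, homTensorHomMap_apply]
  | add x y hx hy => simp only [map_add, hx, hy]

namespace IsModuleAlgebra

variable (hρ : IsModuleAlgebra R B A ρ)
include hρ

lemma comp_mul' (b : B) :
    ρ b ∘ₗ LinearMap.mul' R A = LinearMap.mul' R A ∘ₗ tensorAction ρ ρ (comul b) := by
  rw [← act2_apply]
  exact hρ.1 b

lemma map_mul'_id_comp (w : B ⊗[R] B) :
    map (LinearMap.mul' R A) LinearMap.id ∘ₗ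
        tensorAction (tensorAction ρ ρ) ρ (map comul LinearMap.id w) =
      tensorAction ρ ρ w ∘ₗ map (LinearMap.mul' R A) LinearMap.id := by
  induction w using TensorProduct.induction_on with
  | zero => simp
  | tmul b b' => simp [← map_comp, hρ.comp_mul']
  | add x y hx hy => simp only [map_add, LinearMap.comp_add, LinearMap.add_comp, hx, hy]

lemma map_id_mul'_comp (w : B ⊗[R] B) :
    map LinearMap.id (LinearMap.mul' R A) ∘ₗ
        tensorAction ρ (tensorAction ρ ρ) (map LinearMap.id comul w) =
      tensorAction ρ ρ w ∘ₗ map LinearMap.id (LinearMap.mul' R A) := by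
  induction w using TensorProduct.induction_on with
  | zero => simp
  | tmul b b' => simp [← map_comp, hρ.comp_mul']
  | add x y hx hy => simp only [map_add, LinearMap.comp_add, LinearMap.add_comp, hx, hy]

lemma mul'_tensorAction_one_tmul (x : B ⊗[R] B) (a : A) :
    LinearMap.mul' R A (tensorAction ρ ρ x (1 ⊗ₜ a)) =
      ρ (TensorProduct.lid R B (map counit LinearMap.id x)) a := by
  induction x using TensorProduct.induction_on with
  | zero => simp
  | tmul b b' => simp [hρ.2 b]
  | add x y hx hy => simp only [map_add, LinearMap.add_apply, hx, hy]

lemma mul'_tensorAction_tmul_one (x : B ⊗[R] B) (a : A) :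
    LinearMap.mul' R A (tensorAction ρ ρ x (a ⊗ₜ 1)) =
      ρ (TensorProduct.rid R B (map LinearMap.id counit x)) a := by
  induction x using TensorProduct.induction_on with
  | zero => simp
  | tmul b b' => simp [hρ.2 b']
  | add x y hx hy => simp only [map_add, LinearMap.add_apply, hx, hy]

lemma twMul_twMul_left (F : B ⊗[R] B) (a b c : A) :
    twMul R B A ρ F (twMul R B A ρ F a b) c =
      LinearMap.mul' R A (map (LinearMap.mul' R A) LinearMap.id
        (tensorAction (tensorAction ρ ρ) ρ (map comul LinearMap.id F * F ⊗ₜ 1)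
          ((a ⊗ₜ b) ⊗ₜ c))) := by
  rw [map_mul, Module.End.mul_apply, tensorAction_tmul, map_one,
    ← LinearMap.comp_apply (map _ _), hρ.map_mul'_id_comp]
  simp [twMul, act2_apply]

lemma twMul_twMul_right (F : B ⊗[R] B) (a b c : A) :
    twMul R B A ρ F a (twMul R B A ρ F b c) =
      LinearMap.mul' R A (map LinearMap.id (LinearMap.mul' R A)
        (tensorAction ρ (tensorAction ρ ρ) (map LinearMap.id comul F * 1 ⊗ₜ F)
          (a ⊗ₜ (b ⊗ₜ c)))) := by
  rw [map_mul, Module.End.mul_apply, tensorAction_tmul, map_one,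
    ← LinearMap.comp_apply (map _ _), hρ.map_id_mul'_comp]
  simp [twMul, act2_apply]

end IsModuleAlgebra

end ModuleAlgebra

theorem twisted_mul_assoc_unital_general
    (k : Type*) [Field k]
    (B : Type*) [Ring B] [Bialgebra k B]
    (A : Type*) [Ring A] [Algebra k A]
    (ρ : B →ₐ[k] Module.End k A) (hρ : IsModuleAlgebra k B A ρ)
    (F : B ⊗[k] B) (hF : IsTwisting k B F) :
    (∀ a b c : A, twMul k B A ρ F (twMul k B A ρ F a b) c
        = twMul k B A ρ F a (twMul k B A ρ F b c)) ∧
    (∀ a : A, twMul k B A ρ F 1 a = a ∧ twMul k B A ρ F a 1 = a) := by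
  obtain ⟨hcocycle, hcounit_left, hcounit_right⟩ := hF
  refine ⟨fun a b c => ?_, fun a => ⟨?_, ?_⟩⟩
  · rw [hρ.twMul_twMul_left, hρ.twMul_twMul_right, hcocycle]
    exact LinearMap.congr_fun (mul'_comp_map_mul'_id_comp_tensorAction_assoc_symm ρ _)
      ((a ⊗ₜ b) ⊗ₜ c)
  · rw [twMul, act2_apply, hρ.mul'_tensorAction_one_tmul, hcounit_left, map_one,
      Module.End.one_apply]
  · rw [twMul, act2_apply, hρ.mul'_tensorAction_tmul_one, hcounit_right, map_one,
      Module.End.one_apply]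

/-- If `A` is a left `B`-module algebra over a bialgebra `B`
(over a field `k` of characteristic zero) and `F ∈ B ⊗ B` is a twisting element, then
`a * b := μ_A (F (a ⊗ b))` is an associative unital multiplication on `A`
with the same unit `1_A`. -/
theorem twisted_mul_assoc_unital
    (k : Type*) [Field k] [CharZero k]
    (B : Type*) [Ring B] [Bialgebra k B]
    (A : Type*) [Ring A] [Algebra k A]
    (ρ : B →ₐ[k] Module.End k A) (hρ : IsModuleAlgebra k B A ρ)
    (F : B ⊗[k] B) (hF : IsTwisting k B F) :
    (∀ a b c : A, twMul k B A ρ F (twMul k B A ρ F a b) c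
        = twMul k B A ρ F a (twMul k B A ρ F b c)) ∧
    (∀ a : A, twMul k B A ρ F 1 a = a ∧ twMul k B A ρ F a 1 = a) :=
  twisted_mul_assoc_unital_general k B A ρ hρ F hF
end

section
/- For any bialgebra B, the vector space twi(B) of solutions ξ ∈ B⊗B of (Δ⊗id)ξ + ξ⊗1 = (id⊗Δ)ξ + 1⊗ξ, modulo the equivalence ξ ∼ ξ + Δ(γ) − 1⊗γ − γ⊗1 for γ ∈ B, is isomorphic to the second cohomology group H²(Ω(B)) of the cobar construction of the coalgebra underlying B. -/
open TensorProduct Coalgebra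

section LogTwist

variable (k : Type*) [CommRing k]
variable (B : Type*) [Ring B] [Bialgebra k B]

/-- The map `x ↦ x ⊗ 1`. -/
noncomputable def rUnit : B →ₗ[k] B ⊗[k] B := (TensorProduct.mk k B B).flip 1

/-- The map `x ↦ 1 ⊗ x`. -/
noncomputable def lUnit : B →ₗ[k] B ⊗[k] B := TensorProduct.mk k B B 1

/-- The 'logarithmic' twisting equation `(Δ⊗id)f + f⊗1 = (id⊗Δ)f + 1⊗f` in `B⊗B⊗B`. -/
def LogTwistEq (f : B ⊗[k] B) : Prop :=
  TensorProduct.map Coalgebra.comul LinearMap.id f + f ⊗ₜ[k] (1 : B) =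
    (TensorProduct.assoc k B B B).symm
      (TensorProduct.map LinearMap.id Coalgebra.comul f + (1 : B) ⊗ₜ[k] f)

/-- The reduced coproduct `Δ̄(u) = Δ(u) − u⊗1 − 1⊗u`, as a map on all of `B`. -/
noncomputable def redComul : B →ₗ[k] B ⊗[k] B :=
  Coalgebra.comul - rUnit k B - lUnit k B

/-- The coaugmentation coideal `B̄ = ker ε`. -/
noncomputable def kerCounit : Submodule k B :=
  LinearMap.ker (Coalgebra.counit (R := k) (A := B))

end LogTwist

section Stmt10

variable (k : Type*) [CommRing k] (B : Type*) [Ring B] [Bialgebra k B]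

/-- The linear map whose kernel consists of the solutions of
`(Δ⊗id)ξ + ξ⊗1 = (id⊗Δ)ξ + 1⊗ξ`. -/
noncomputable def logTwistMap : B ⊗[k] B →ₗ[k] (B ⊗[k] B) ⊗[k] B :=
  (TensorProduct.map Coalgebra.comul LinearMap.id
      + (TensorProduct.mk k (B ⊗[k] B) B).flip 1)
    - ((TensorProduct.assoc k B B B).symm.toLinearMap ∘ₗ
        (TensorProduct.map LinearMap.id Coalgebra.comul + TensorProduct.mk k B (B ⊗[k] B) 1))

/-- The submodule of solutions of the logarithmic twisting equation. -/
noncomputable def twiCocycles : Submodule k (B ⊗[k] B) := LinearMap.ker (logTwistMap k B)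

/-- The submodule of coboundaries `{Δ(γ) − 1⊗γ − γ⊗1 : γ ∈ B}`. -/
noncomputable def twiCoboundaries : Submodule k (B ⊗[k] B) := LinearMap.range (redComul k B)

/-- The moduli space `twi(B)`: solutions modulo the equivalence
`ξ ∼ ξ + Δ(γ) − 1⊗γ − γ⊗1`. -/
noncomputable abbrev twi :=
  twiCocycles k B ⧸ ((twiCoboundaries k B).comap (twiCocycles k B).subtype)

/-- The degree-2 differential of the cobar construction (on the ambient space `B⊗B`):
`d₂ = Δ̄⊗id − id⊗Δ̄`. -/
noncomputable def cobarD2 : B ⊗[k] B →ₗ[k] (B ⊗[k] B) ⊗[k] B :=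
  TensorProduct.map (redComul k B) LinearMap.id
    - ((TensorProduct.assoc k B B B).symm.toLinearMap ∘ₗ
        TensorProduct.map LinearMap.id (redComul k B))

/-- Degree-2 cocycles of the cobar construction: elements of `B̄⊗B̄` killed by `d₂`. -/
noncomputable def cobarZ2 : Submodule k (B ⊗[k] B) :=
  LinearMap.range (TensorProduct.map (kerCounit k B).subtype (kerCounit k B).subtype) ⊓
    LinearMap.ker (cobarD2 k B)

/-- Degree-2 coboundaries of the cobar construction: the image of `d₁ = Δ̄ : B̄ → B̄⊗B̄`. -/
noncomputable def cobarB2 : Submodule k (B ⊗[k] B) :=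
  LinearMap.range ((redComul k B) ∘ₗ (kerCounit k B).subtype)

/-- The second cohomology group `H²(Ω(B))` of the cobar construction. -/
noncomputable abbrev cobarH2 :=
  cobarZ2 k B ⧸ ((cobarB2 k B).comap (cobarZ2 k B).subtype)

/-!
Let `Z = ker d₂ ⊆ B ⊗ B` with `d₂ = Δ̄ ⊗ id − id ⊗ Δ̄`: the logarithmic twisting equation is
exactly `d₂ ξ = 0`, so `twi(B) = Z / Δ̄(B)`, while `H²(Ω(B)) = Z₂ / Δ̄(B̄)` with
`Z₂ = Z ∩ (B̄ ⊗ B̄)`. Applying `ε ⊗ ε ⊗ id` and `id ⊗ ε ⊗ ε` to `d₂ ξ = 0` gives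
`(ε ⊗ id) ξ = (id ⊗ ε) ξ = c 1` with `c = (ε ⊗ ε) ξ`, so `ξ + Δ̄(c 1) ∈ B̄ ⊗ B̄` and
`Z = Z₂ + Δ̄(B)`. Since `(ε ⊗ ε)(Δ̄ γ) = −ε(γ)`, also `Z₂ ∩ Δ̄(B) = Δ̄(B̄)`, and the second
isomorphism theorem identifies the two quotients.
-/

section CounitTensor

variable (R C M : Type*) [CommSemiring R] [AddCommMonoid C] [Module R C] [AddCommMonoid M]
  [Module R M]

noncomputable def counitLeft [CoalgebraStruct R C] : C ⊗[R] M →ₗ[R] M :=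
  (TensorProduct.lid R M).toLinearMap ∘ₗ (Coalgebra.counit (R := R) (A := C)).rTensor M

noncomputable def counitRight [CoalgebraStruct R C] : M ⊗[R] C →ₗ[R] M :=
  (TensorProduct.rid R M).toLinearMap ∘ₗ (Coalgebra.counit (R := R) (A := C)).lTensor M

variable {R C M}

@[simp]
lemma counitLeft_tmul [CoalgebraStruct R C] (c : C) (m : M) :
    counitLeft R C M (c ⊗ₜ m) = Coalgebra.counit (R := R) c • m := by
  simp [counitLeft]

@[simp]
lemma counitRight_tmul [CoalgebraStruct R C] (m : M) (c : C) :
    counitRight R C M (m ⊗ₜ c) = Coalgebra.counit (R := R) c • m := by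
  simp [counitRight]

@[simp]
lemma counitLeft_comul [Coalgebra R C] (c : C) : counitLeft R C C (Coalgebra.comul c) = c := by
  simp [counitLeft]

@[simp]
lemma counitRight_comul [Coalgebra R C] (c : C) : counitRight R C C (Coalgebra.comul c) = c := by
  simp [counitRight]

lemma counit_eq_counit_counitLeft [CoalgebraStruct R C] (w : C ⊗[R] C) :
    Coalgebra.counit (R := R) w = Coalgebra.counit (R := R) (counitLeft R C C w) := by
  induction w using TensorProduct.induction_on with
  | zero => simp
  | tmul x y => simp [mul_comm]
  | add a b ha hb => simp [ha, hb]

@[simp]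
lemma counit_comul_tensor [Coalgebra R C] (c : C) :
    Coalgebra.counit (R := R) (Coalgebra.comul (R := R) c) = Coalgebra.counit (R := R) c := by
  rw [counit_eq_counit_counitLeft, counitLeft_comul]

lemma counitLeft_assoc_symm_tmul [CoalgebraStruct R C] (x : C) (w : C ⊗[R] M) :
    counitLeft R (C ⊗[R] C) M ((TensorProduct.assoc R C C M).symm (x ⊗ₜ w)) =
      Coalgebra.counit (R := R) x • counitLeft R C M w := by
  induction w using TensorProduct.induction_on with
  | zero => simp
  | tmul y z => simp [TensorProduct.assoc_symm_tmul, smul_smul, mul_comm]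
  | add a b ha hb => simp [tmul_add, ha, hb]

lemma counitRight_assoc_tmul [CoalgebraStruct R C] (w : M ⊗[R] C) (z : C) :
    counitRight R (C ⊗[R] C) M (TensorProduct.assoc R M C C (w ⊗ₜ z)) =
      Coalgebra.counit (R := R) z • counitRight R C M w := by
  induction w using TensorProduct.induction_on with
  | zero => simp
  | tmul x y => simp [mul_smul]
  | add a b ha hb => simp [add_tmul, ha, hb]

end CounitTensor

section AssocSymm

variable {R M N P : Type*} [CommSemiring R] [AddCommMonoid M] [Module R M] [AddCommMonoid N]
  [Module R N] [AddCommMonoid P] [Module R P]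

lemma assoc_symm_tmul_eq_rTensor_mk (m : M) (z : N ⊗[R] P) :
    (TensorProduct.assoc R M N P).symm (m ⊗ₜ z) = (TensorProduct.mk R M N m).rTensor P z := by
  induction z using TensorProduct.induction_on with
  | zero => simp
  | tmul n p => simp [TensorProduct.assoc_symm_tmul]
  | add a b ha hb => simp [tmul_add, ha, hb]

lemma assoc_symm_lTensor_mk (n : N) (z : M ⊗[R] P) :
    (TensorProduct.assoc R M N P).symm ((TensorProduct.mk R N P n).lTensor M z) =
      ((TensorProduct.mk R M N).flip n).rTensor P z := by
  induction z using TensorProduct.induction_on with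
  | zero => simp
  | tmul m p => simp [TensorProduct.assoc_symm_tmul]
  | add a b ha hb => simp [ha, hb]

lemma assoc_symm_lTensor_mk_flip (p : P) (z : M ⊗[R] N) :
    (TensorProduct.assoc R M N P).symm (((TensorProduct.mk R N P).flip p).lTensor M z) =
      z ⊗ₜ p := by
  induction z using TensorProduct.induction_on with
  | zero => simp
  | tmul m n => simp [TensorProduct.assoc_symm_tmul]
  | add a b ha hb => simp [ha, hb, add_tmul]

end AssocSymm

noncomputable def Submodule.quotientEquivOfSupEqOfInfEq {R M : Type*} [Ring R] [AddCommGroup M]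
    [Module R M] {N D Z K : Submodule R M} (hZ : N ⊔ D = Z) (hK : N ⊓ D = K) :
    (N ⧸ K.comap N.subtype) ≃ₗ[R] Z ⧸ D.comap Z.subtype := by
  subst hZ hK
  exact LinearMap.quotientInfEquivSupQuotient N D

lemma redComul_apply (x : B) :
    redComul k B x = Coalgebra.comul x - x ⊗ₜ[k] (1 : B) - (1 : B) ⊗ₜ[k] x := rfl

lemma counitLeft_redComul (x : B) :
    counitLeft k B B (redComul k B x) = -(Coalgebra.counit (R := k) x • (1 : B)) := by
  simp [redComul_apply]

lemma counitRight_redComul (x : B) :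
    counitRight k B B (redComul k B x) = -(Coalgebra.counit (R := k) x • (1 : B)) := by
  simp [redComul_apply]

lemma counit_redComul (x : B) :
    Coalgebra.counit (R := k) (redComul k B x) = -Coalgebra.counit (R := k) x := by
  simp [redComul_apply]

lemma logTwistMap_eq_cobarD2 : logTwistMap k B = cobarD2 k B := by
  ext x y
  simp only [logTwistMap, cobarD2, redComul, rUnit, lUnit, LinearMap.sub_apply,
    LinearMap.add_apply, LinearMap.coe_comp, Function.comp_apply, LinearEquiv.coe_coe,
    TensorProduct.map_tmul, TensorProduct.mk_apply, LinearMap.flip_apply,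
    LinearMap.id_coe, id_eq, TensorProduct.sub_tmul, TensorProduct.tmul_sub, map_sub, map_add,
    TensorProduct.assoc_symm_tmul, AlgebraTensorModule.curry_apply, curry_apply,
    LinearMap.coe_restrictScalars]
  abel

lemma twiCocycles_eq_ker_cobarD2 : twiCocycles k B = LinearMap.ker (cobarD2 k B) := by
  rw [twiCocycles, logTwistMap_eq_cobarD2]

lemma cobarD2_redComul (x : B) : cobarD2 k B (redComul k B x) = 0 := by
  simp only [cobarD2, LinearMap.sub_apply, LinearMap.coe_comp, Function.comp_apply,
    LinearEquiv.coe_coe, ← LinearMap.rTensor_def, ← LinearMap.lTensor_def]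
  rw [redComul]
  simp only [rUnit, lUnit, LinearMap.rTensor_sub, LinearMap.lTensor_sub, LinearMap.sub_apply,
    map_sub, LinearMap.rTensor_tmul, LinearMap.lTensor_tmul, TensorProduct.mk_apply,
    LinearMap.flip_apply, Bialgebra.comul_one, Algebra.TensorProduct.one_def,
    Coalgebra.coassoc_symm_apply, assoc_symm_tmul_eq_rTensor_mk, assoc_symm_lTensor_mk,
    assoc_symm_lTensor_mk_flip]
  abel

lemma counitLeft_cobarD2 (ξ : B ⊗[k] B) :
    counitLeft k (B ⊗[k] B) B (cobarD2 k B ξ) =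
      Coalgebra.counit (R := k) ξ • (1 : B) - counitLeft k B B ξ := by
  induction ξ using TensorProduct.induction_on with
  | zero => simp
  | tmul x y =>
    simp [cobarD2, counitLeft_assoc_symm_tmul, counit_redComul, counitLeft_redComul, smul_smul,
      mul_comm, sub_eq_add_neg, add_comm]
  | add a b ha hb => simp only [map_add, ha, hb, add_smul]; abel

lemma counitRight_assoc_cobarD2 (ξ : B ⊗[k] B) :
    counitRight k (B ⊗[k] B) B (TensorProduct.assoc k B B B (cobarD2 k B ξ)) =
      counitRight k B B ξ - Coalgebra.counit (R := k) ξ • (1 : B) := by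
  induction ξ using TensorProduct.induction_on with
  | zero => simp
  | tmul x y =>
    simp [cobarD2, counitRight_assoc_tmul, counit_redComul, counitRight_redComul, smul_smul,
      mul_comm, sub_eq_add_neg, add_comm]
  | add a b ha hb => simp only [map_add, ha, hb, add_smul]; abel

lemma counitLeft_eq_of_cobarD2_eq_zero {ξ : B ⊗[k] B} (h : cobarD2 k B ξ = 0) :
    counitLeft k B B ξ = Coalgebra.counit (R := k) ξ • (1 : B) := by
  have := counitLeft_cobarD2 k B ξ
  rw [h, map_zero, eq_comm, sub_eq_zero] at this
  exact this.symm

lemma counitRight_eq_of_cobarD2_eq_zero {ξ : B ⊗[k] B} (h : cobarD2 k B ξ = 0) :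
    counitRight k B B ξ = Coalgebra.counit (R := k) ξ • (1 : B) := by
  have := counitRight_assoc_cobarD2 k B ξ
  rwa [h, map_zero, map_zero, eq_comm, sub_eq_zero] at this

noncomputable def kerCounitProj : B →ₗ[k] B :=
  LinearMap.id - LinearMap.toSpanSingleton k B 1 ∘ₗ Coalgebra.counit

lemma kerCounitProj_apply (x : B) :
    kerCounitProj k B x = x - Coalgebra.counit (R := k) x • (1 : B) := rfl

lemma kerCounitProj_mem_kerCounit (x : B) : kerCounitProj k B x ∈ kerCounit k B := by
  simp [kerCounit, kerCounitProj_apply, Bialgebra.counit_one]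

lemma rTensor_kerCounitProj_apply (ξ : B ⊗[k] B) :
    (kerCounitProj k B).rTensor B ξ = ξ - (1 : B) ⊗ₜ counitLeft k B B ξ := by
  induction ξ using TensorProduct.induction_on with
  | zero => simp
  | tmul x y => simp [kerCounitProj_apply, sub_tmul, smul_tmul]
  | add a b ha hb => simp only [map_add, ha, hb, tmul_add]; abel

lemma lTensor_kerCounitProj_apply (ξ : B ⊗[k] B) :
    (kerCounitProj k B).lTensor B ξ = ξ - counitRight k B B ξ ⊗ₜ (1 : B) := by
  induction ξ using TensorProduct.induction_on with
  | zero => simp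
  | tmul x y => simp [kerCounitProj_apply, tmul_sub, smul_tmul]
  | add a b ha hb => simp only [map_add, ha, hb, add_tmul]; abel

lemma mem_range_map_subtype_of_counitLeft_counitRight_eq_zero {ξ : B ⊗[k] B}
    (hl : counitLeft k B B ξ = 0) (hr : counitRight k B B ξ = 0) :
    ξ ∈ LinearMap.range (TensorProduct.map (kerCounit k B).subtype (kerCounit k B).subtype) := by
  let proj := (kerCounitProj k B).codRestrict _ (kerCounitProj_mem_kerCounit k B)
  refine ⟨TensorProduct.map proj proj ξ, ?_⟩
  calc TensorProduct.map (kerCounit k B).subtype (kerCounit k B).subtype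
        (TensorProduct.map proj proj ξ)
      = (kerCounitProj k B).rTensor B ((kerCounitProj k B).lTensor B ξ) := by
        rw [← LinearMap.comp_apply, ← TensorProduct.map_comp, ← LinearMap.comp_apply,
          LinearMap.rTensor_comp_lTensor]
        rfl
    _ = ξ := by
        rw [lTensor_kerCounitProj_apply, hr, zero_tmul, sub_zero, rTensor_kerCounitProj_apply,
          hl, tmul_zero, sub_zero]

lemma counit_eq_zero_of_mem_range_map_subtype {ξ : B ⊗[k] B}
    (h : ξ ∈ LinearMap.range
      (TensorProduct.map (kerCounit k B).subtype (kerCounit k B).subtype)) :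
    Coalgebra.counit (R := k) ξ = 0 := by
  obtain ⟨w, rfl⟩ := h
  induction w using TensorProduct.induction_on with
  | zero => simp
  | tmul x y => simp [show Coalgebra.counit (R := k) (x : B) = 0 from x.2]
  | add a b ha hb => simp [ha, hb]

lemma cobarB2_le_cobarZ2 : cobarB2 k B ≤ cobarZ2 k B := by
  rintro _ ⟨⟨x, hx⟩, rfl⟩
  have hx : Coalgebra.counit (R := k) x = 0 := hx
  refine ⟨mem_range_map_subtype_of_counitLeft_counitRight_eq_zero k B ?_ ?_,
    cobarD2_redComul k B x⟩
  · simp [counitLeft_redComul, hx]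
  · simp [counitRight_redComul, hx]

lemma cobarZ2_inf_twiCoboundaries : cobarZ2 k B ⊓ twiCoboundaries k B = cobarB2 k B := by
  refine le_antisymm ?_ (le_inf (cobarB2_le_cobarZ2 k B) ?_)
  · rintro _ ⟨⟨hrange, -⟩, x, rfl⟩
    have hx := counit_eq_zero_of_mem_range_map_subtype k B hrange
    rw [counit_redComul, neg_eq_zero] at hx
    exact ⟨⟨x, hx⟩, rfl⟩
  · rintro _ ⟨x, rfl⟩
    exact ⟨x, rfl⟩

lemma cobarZ2_sup_twiCoboundaries : cobarZ2 k B ⊔ twiCoboundaries k B = twiCocycles k B := by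
  rw [twiCocycles_eq_ker_cobarD2]
  refine le_antisymm (sup_le inf_le_right ?_) fun ξ hξ => ?_
  · rintro _ ⟨x, rfl⟩
    exact cobarD2_redComul k B x
  rw [LinearMap.mem_ker] at hξ
  have hnormal : ξ + redComul k B (Coalgebra.counit (R := k) ξ • 1) ∈ cobarZ2 k B := by
    refine ⟨mem_range_map_subtype_of_counitLeft_counitRight_eq_zero k B ?_ ?_, ?_⟩
    · simp [counitLeft_eq_of_cobarD2_eq_zero k B hξ, counitLeft_redComul, Bialgebra.counit_one]
    · simp [counitRight_eq_of_cobarD2_eq_zero k B hξ, counitRight_redComul, Bialgebra.counit_one]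
    · simp [hξ, cobarD2_redComul]
  have hcob : -redComul k B (Coalgebra.counit (R := k) ξ • 1) ∈ twiCoboundaries k B :=
    neg_mem ⟨_, rfl⟩
  simpa using Submodule.add_mem_sup hnormal hcob

theorem twi_iso_cobar_H2_general
    (k : Type*) [Field k] (B : Type*) [Ring B] [Bialgebra k B] :
    Nonempty (twi k B ≃ₗ[k] cobarH2 k B) :=
  ⟨(Submodule.quotientEquivOfSupEqOfInfEq (cobarZ2_sup_twiCoboundaries k B)
    (cobarZ2_inf_twiCoboundaries k B)).symm⟩

/-- For any bialgebra `B`, `twi(B) ≅ H²(Ω(B))`. -/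
theorem twi_iso_cobar_H2
    (k : Type*) [Field k] [CharZero k] (B : Type*) [Ring B] [Bialgebra k B] :
    Nonempty (twi k B ≃ₗ[k] cobarH2 k B) :=
  twi_iso_cobar_H2_general k B

end Stmt10
end

section
/- Let A = k[p,q], θ₁ := ∂/∂p and θ₂ := q·∂/∂p. Then θ₁ and θ₂ are commuting derivations of A, and the formal deformation of A given by the UDF exp[t(p₁⊗p₂ − p₂⊗p₁)] (with p_i acting by θ_i) is trivial, i.e., equivalent over k[[t]] to the undeformed commutative product. -/
open TensorProduct Coalgebra

open TensorProduct Coalgebra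

namespace PrimitivePolyBialgebra

variable (k : Type*) [CommRing k] (σ : Type*)

/-- The comultiplication of `k[xᵢ : i ∈ σ]` determined by declaring every `xᵢ` primitive. -/
noncomputable def comulAlg :
    MvPolynomial σ k →ₐ[k] MvPolynomial σ k ⊗[k] MvPolynomial σ k :=
  MvPolynomial.aeval (fun i => MvPolynomial.X i ⊗ₜ[k] 1 + 1 ⊗ₜ[k] MvPolynomial.X i)

/-- The counit of `k[xᵢ : i ∈ σ]`, sending every `xᵢ` to `0`. -/
noncomputable def counitAlg : MvPolynomial σ k →ₐ[k] k :=
  MvPolynomial.aeval 0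

noncomputable instance : Coalgebra k (MvPolynomial σ k) where
  comul := (comulAlg k σ).toLinearMap
  counit := (counitAlg k σ).toLinearMap
  coassoc := by
    have h : ((Algebra.TensorProduct.assoc k k k (MvPolynomial σ k) (MvPolynomial σ k)
          (MvPolynomial σ k)).toAlgHom.comp
        ((Algebra.TensorProduct.map (comulAlg k σ) (AlgHom.id k _)).comp (comulAlg k σ))) =
        ((Algebra.TensorProduct.map (AlgHom.id k _) (comulAlg k σ)).comp (comulAlg k σ)) := by
      apply MvPolynomial.algHom_ext
      intro i
      simp [comulAlg, tmul_add, add_tmul, Algebra.TensorProduct.one_def, add_assoc]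
    exact LinearMap.ext fun p => congrArg (fun f => f p) (congrArg AlgHom.toLinearMap h)
  rTensor_counit_comp_comul := by
    have h : ((Algebra.TensorProduct.map (counitAlg k σ) (AlgHom.id k _)).comp (comulAlg k σ)) =
        (Algebra.TensorProduct.includeRight :
          MvPolynomial σ k →ₐ[k] k ⊗[k] MvPolynomial σ k) := by
      apply MvPolynomial.algHom_ext
      intro i
      simp [comulAlg, counitAlg, tmul_add, add_tmul]
    exact LinearMap.ext fun p => congrArg (fun f => f p) (congrArg AlgHom.toLinearMap h)
  lTensor_counit_comp_comul := by
    have h : ((Algebra.TensorProduct.map (AlgHom.id k _) (counitAlg k σ)).comp (comulAlg k σ)) =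
        (Algebra.TensorProduct.includeLeft :
          MvPolynomial σ k →ₐ[k] MvPolynomial σ k ⊗[k] k) := by
      apply MvPolynomial.algHom_ext
      intro i
      simp [comulAlg, counitAlg, tmul_add, add_tmul]
    exact LinearMap.ext fun p => congrArg (fun f => f p) (congrArg AlgHom.toLinearMap h)

noncomputable instance : Bialgebra k (MvPolynomial σ k) :=
  Bialgebra.mk' k (MvPolynomial σ k) (map_one (counitAlg k σ))
    (fun {a b} => map_mul (counitAlg k σ) a b)
    (map_one (comulAlg k σ)) (fun {a b} => map_mul (comulAlg k σ) a b)

end PrimitivePolyBialgebra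

section FormalUDF

variable (k : Type*) [CommRing k]
variable (B : Type*) [Ring B] [Bialgebra k B]
variable (A : Type*) [Ring A] [Algebra k A]

/-- A family of coefficients `(Fₙ)ₙ` (representing `F = Σ tⁿ Fₙ ∈ (B⊗B)[[t]]`) is a
universal deformation formula over `k[[t]]` based on `B`: `F₀ = 1⊗1`, and the twisting
element conditions hold `t`-coefficientwise. -/
def IsFormalUDF (Fc : ℕ → B ⊗[k] B) : Prop :=
  Fc 0 = 1 ∧
  (∀ n : ℕ,
    ∑ ij ∈ Finset.HasAntidiagonal.antidiagonal n,
      (TensorProduct.map Coalgebra.comul LinearMap.id (Fc ij.1)) * (Fc ij.2 ⊗ₜ[k] (1 : B)) =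
    ∑ ij ∈ Finset.HasAntidiagonal.antidiagonal n,
      (TensorProduct.assoc k B B B).symm
        ((TensorProduct.map LinearMap.id Coalgebra.comul (Fc ij.1)) *
          ((1 : B) ⊗ₜ[k] Fc ij.2))) ∧
  (∀ n : ℕ, TensorProduct.lid k B (TensorProduct.map Coalgebra.counit LinearMap.id (Fc n)) =
      if n = 0 then 1 else 0) ∧
  (∀ n : ℕ, TensorProduct.rid k B (TensorProduct.map LinearMap.id Coalgebra.counit (Fc n)) =
      if n = 0 then 1 else 0)

/-- The star product on `A[[t]]` determined by the formal twisting family `(Fₙ)ₙ`: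
`f * g := Σₙ tⁿ Σ_{i+j+l=n} μ(F_l(fᵢ ⊗ gⱼ))`. -/
noncomputable def starPS (ρ : B →ₐ[k] Module.End k A) (Fc : ℕ → B ⊗[k] B)
    (x y : PowerSeries A) : PowerSeries A :=
  PowerSeries.mk fun n =>
    ∑ lm ∈ Finset.HasAntidiagonal.antidiagonal n, ∑ ij ∈ Finset.HasAntidiagonal.antidiagonal lm.2,
      LinearMap.mul' k A (act2 k B A ρ (Fc lm.1)
        ((PowerSeries.coeff ij.1 x) ⊗ₜ[k] (PowerSeries.coeff ij.2 y)))

end FormalUDF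

open MvPolynomial in
/-- The coefficient family of `exp[t(p₁⊗p₂ − p₂⊗p₁)] ∈ (k[p₁,p₂] ⊗ k[p₁,p₂])[[t]]`. -/
noncomputable def expF (k : Type) [Field k] :
    ℕ → MvPolynomial (Fin 2) k ⊗[k] MvPolynomial (Fin 2) k := fun n =>
  ((n.factorial : k))⁻¹ • ((X 0 ⊗ₜ[k] X 1 - X 1 ⊗ₜ[k] X 0) ^ n)


/-!
With `θ₂ = q θ₁`, the bidifferential operator `θ₁ ⊗ θ₂ − θ₂ ⊗ θ₁` is killed by the
multiplication: `θ₁a · qθ₁b − qθ₁a · θ₁b = 0`. Every higher coefficient of the exponential has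
it as a left factor, so it too vanishes after multiplication. The star product is therefore the
undeformed product, and the identity is an equivalence.
-/

namespace MvPolynomial

variable {R σ : Type*} [CommSemiring R]

theorem commute_pderiv_mulLeft_X {i j : σ} (h : j ≠ i) :
    Commute (pderiv (R := R) i).toLinearMap (LinearMap.mulLeft R (X j : MvPolynomial σ R)) :=
  LinearMap.ext fun f => by simp [pderiv_X_of_ne h]

theorem commute_pderiv_mulLeft_X_comp_pderiv {i j : σ} (h : j ≠ i) :
    Commute (pderiv (R := R) i).toLinearMap
      (LinearMap.mulLeft R (X j : MvPolynomial σ R) ∘ₗ (pderiv (R := R) i).toLinearMap) :=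
  (commute_pderiv_mulLeft_X h).mul_right (Commute.refl _)

end MvPolynomial

theorem Finset.Nat.sum_antidiagonal_eq_single_zero {M : Type*} [AddCommMonoid M] {n : ℕ}
    {f : ℕ × ℕ → M} (hf : ∀ p ∈ antidiagonal n, p.1 ≠ 0 → f p = 0) :
    ∑ p ∈ antidiagonal n, f p = f (0, n) := by
  refine sum_eq_single_of_mem (0, n) (by simp) fun p hp hne => hf p hp fun h0 => hne ?_
  have := mem_antidiagonal.mp hp
  exact Prod.ext h0 (by omega)

theorem PowerSeries.mk_sum_antidiagonal_single_zero_id {R A : Type*} [CommSemiring R]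
    [Semiring A] [Module R A] (x : PowerSeries A) :
    (PowerSeries.mk fun n => ∑ ij ∈ Finset.HasAntidiagonal.antidiagonal n,
      (Pi.single 0 LinearMap.id : ℕ → A →ₗ[R] A) ij.1 (coeff ij.2 x)) = x := by
  ext n
  rw [coeff_mk, Finset.Nat.sum_antidiagonal_eq_single_zero fun p _ hp => by simp [hp]]
  simp

section Act2

variable {R B A : Type*} [CommRing R] [Ring B] [Bialgebra R B]

theorem act2_tmul [Ring A] [Algebra R A] (ρ : B →ₐ[R] Module.End R A) (a b : B) :
    act2 R B A ρ (a ⊗ₜ[R] b) = TensorProduct.map (ρ a) (ρ b) := by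
  simp [act2]

theorem act2_one [Ring A] [Algebra R A] (ρ : B →ₐ[R] Module.End R A) :
    act2 R B A ρ 1 = LinearMap.id := by
  rw [Algebra.TensorProduct.one_def, act2_tmul, map_one, Module.End.one_eq_id, map_id]

theorem act2_mul [Ring A] [Algebra R A] (ρ : B →ₐ[R] Module.End R A) (u v : B ⊗[R] B) :
    act2 R B A ρ (u * v) = act2 R B A ρ u ∘ₗ act2 R B A ρ v := by
  induction u using TensorProduct.induction_on with
  | zero => simp
  | add u w hu hw => simp [add_mul, hu, hw, LinearMap.add_comp]
  | tmul a b =>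
    induction v using TensorProduct.induction_on with
    | zero => simp
    | add v w hv hw => simp [mul_add, hv, hw, LinearMap.comp_add]
    | tmul c d =>
      rw [Algebra.TensorProduct.tmul_mul_tmul, act2_tmul, act2_tmul, act2_tmul, map_mul, map_mul]
      exact map_comp _ _ _ _

theorem mul'_comp_act2_mul_eq_zero [Ring A] [Algebra R A] {ρ : B →ₐ[R] Module.End R A}
    {c : B ⊗[R] B} (hc : LinearMap.mul' R A ∘ₗ act2 R B A ρ c = 0) (u : B ⊗[R] B) :
    LinearMap.mul' R A ∘ₗ act2 R B A ρ (c * u) = 0 := by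
  rw [act2_mul, ← LinearMap.comp_assoc, hc, LinearMap.zero_comp]

theorem mul'_comp_act2_wedge_eq_zero [CommRing A] [Algebra R A] {ρ : B →ₐ[R] Module.End R A}
    {b₁ b₂ : B} {c : A} (h : ρ b₂ = LinearMap.mulLeft R c ∘ₗ ρ b₁) :
    LinearMap.mul' R A ∘ₗ act2 R B A ρ (b₁ ⊗ₜ b₂ - b₂ ⊗ₜ b₁) = 0 := by
  refine TensorProduct.ext' fun x y => ?_
  simp only [LinearMap.comp_apply, map_sub, LinearMap.sub_apply, act2_tmul, TensorProduct.map_tmul,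
    LinearMap.mul'_apply, h, LinearMap.mulLeft_apply, LinearMap.zero_apply]
  ring

end Act2

theorem starPS_eq_mul {R B A : Type*} [CommRing R] [Ring B] [Bialgebra R B] [Ring A]
    [Algebra R A] {ρ : B →ₐ[R] Module.End R A} {F : ℕ → B ⊗[R] B} (hF₀ : F 0 = 1)
    (hF : ∀ n, LinearMap.mul' R A ∘ₗ act2 R B A ρ (F (n + 1)) = 0) (x y : PowerSeries A) :
    starPS R B A ρ F x y = x * y := by
  ext n
  rw [starPS, PowerSeries.coeff_mk, PowerSeries.coeff_mul,
    Finset.Nat.sum_antidiagonal_eq_single_zero fun p _ hp => ?_]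
  · simp [hF₀, act2_one]
  · obtain ⟨m, hm⟩ := Nat.exists_eq_succ_of_ne_zero hp
    refine Finset.sum_eq_zero fun ij _ => ?_
    rw [hm, ← LinearMap.comp_apply, hF, LinearMap.zero_apply]

open MvPolynomial in
theorem mul'_comp_act2_expF_succ_eq_zero (k : Type) [Field k]
    {ρ : MvPolynomial (Fin 2) k →ₐ[k] Module.End k (MvPolynomial (Fin 2) k)}
    (hρ : ρ (X 1) = LinearMap.mulLeft k (X 1) ∘ₗ ρ (X 0))
    (n : ℕ) :
    LinearMap.mul' k (MvPolynomial (Fin 2) k) ∘ₗ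
      act2 k (MvPolynomial (Fin 2) k) (MvPolynomial (Fin 2) k) ρ (expF k (n + 1)) = 0 := by
  rw [expF, map_smul, LinearMap.comp_smul, pow_succ',
    mul'_comp_act2_mul_eq_zero (mul'_comp_act2_wedge_eq_zero hρ), smul_zero]

open MvPolynomial in
theorem trivial_deformation_example_general
    (k : Type) [Field k]
    (θ₁ θ₂ : Module.End k (MvPolynomial (Fin 2) k))
    (hθ₁ : θ₁ = (pderiv (R := k) (0 : Fin 2)).toLinearMap)
    (hθ₂ : θ₂ = (LinearMap.mulLeft k (X 1 : MvPolynomial (Fin 2) k)) ∘ₗ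
      (pderiv (R := k) (0 : Fin 2)).toLinearMap) :
    Commute θ₁ θ₂ ∧
    ∀ ρ : MvPolynomial (Fin 2) k →ₐ[k] Module.End k (MvPolynomial (Fin 2) k),
      IsModuleAlgebra k (MvPolynomial (Fin 2) k) (MvPolynomial (Fin 2) k) ρ →
      ρ (X 0) = θ₁ → ρ (X 1) = θ₂ →
      ∃ φ : ℕ → (MvPolynomial (Fin 2) k →ₗ[k] MvPolynomial (Fin 2) k),
        φ 0 = LinearMap.id ∧
        (∀ x y : PowerSeries (MvPolynomial (Fin 2) k),
          (PowerSeries.mk fun n => ∑ ij ∈ Finset.HasAntidiagonal.antidiagonal n,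
              φ ij.1 (PowerSeries.coeff ij.2
                (starPS k (MvPolynomial (Fin 2) k) (MvPolynomial (Fin 2) k) ρ (expF k) x y))) =
            (PowerSeries.mk fun n => ∑ ij ∈ Finset.HasAntidiagonal.antidiagonal n,
              φ ij.1 (PowerSeries.coeff ij.2 x)) *
            (PowerSeries.mk fun n => ∑ ij ∈ Finset.HasAntidiagonal.antidiagonal n,
              φ ij.1 (PowerSeries.coeff ij.2 y))) ∧
        Function.Bijective (fun x : PowerSeries (MvPolynomial (Fin 2) k) =>
          PowerSeries.mk fun n => ∑ ij ∈ Finset.HasAntidiagonal.antidiagonal n,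
            φ ij.1 (PowerSeries.coeff ij.2 x)) := by
  subst hθ₁ hθ₂
  refine ⟨MvPolynomial.commute_pderiv_mulLeft_X_comp_pderiv (by decide), fun ρ _ hρ₁ hρ₂ => ?_⟩
  have hρ : ρ (X 1) = LinearMap.mulLeft k (X 1) ∘ₗ ρ (X 0) := by rw [hρ₁, hρ₂]
  have hstar := starPS_eq_mul (by simp [expF]) (mul'_comp_act2_expF_succ_eq_zero k hρ)
  refine ⟨Pi.single 0 LinearMap.id, Pi.single_eq_same _ _, fun x y => ?_, ?_⟩
  · simp only [PowerSeries.mk_sum_antidiagonal_single_zero_id, hstar]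
  · simp only [PowerSeries.mk_sum_antidiagonal_single_zero_id]
    exact Function.bijective_id

open MvPolynomial in
/-- On `A = k[p,q]` the derivations `θ₁ = ∂/∂p` and `θ₂ = q·∂/∂p`
commute, and the formal deformation of `A` given by the UDF `exp[t(p₁⊗p₂ − p₂⊗p₁)]`,
with `pᵢ` acting by `θᵢ`, is trivial: it is equivalent over `k[[t]]`, via an equivalence
`id + tφ₁ + t²φ₂ + ⋯`, to the undeformed commutative product.  (Here `p = X 0`,
`q = X 1`.) -/
theorem trivial_deformation_example
    (k : Type) [Field k] [CharZero k]
    (θ₁ θ₂ : Module.End k (MvPolynomial (Fin 2) k))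
    (hθ₁ : θ₁ = (pderiv (R := k) (0 : Fin 2)).toLinearMap)
    (hθ₂ : θ₂ = (LinearMap.mulLeft k (X 1 : MvPolynomial (Fin 2) k)) ∘ₗ
      (pderiv (R := k) (0 : Fin 2)).toLinearMap) :
    Commute θ₁ θ₂ ∧
    ∀ ρ : MvPolynomial (Fin 2) k →ₐ[k] Module.End k (MvPolynomial (Fin 2) k),
      IsModuleAlgebra k (MvPolynomial (Fin 2) k) (MvPolynomial (Fin 2) k) ρ →
      ρ (X 0) = θ₁ → ρ (X 1) = θ₂ →
      ∃ φ : ℕ → (MvPolynomial (Fin 2) k →ₗ[k] MvPolynomial (Fin 2) k),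
        φ 0 = LinearMap.id ∧
        (∀ x y : PowerSeries (MvPolynomial (Fin 2) k),
          (PowerSeries.mk fun n => ∑ ij ∈ Finset.HasAntidiagonal.antidiagonal n,
              φ ij.1 (PowerSeries.coeff ij.2
                (starPS k (MvPolynomial (Fin 2) k) (MvPolynomial (Fin 2) k) ρ (expF k) x y))) =
            (PowerSeries.mk fun n => ∑ ij ∈ Finset.HasAntidiagonal.antidiagonal n,
              φ ij.1 (PowerSeries.coeff ij.2 x)) *
            (PowerSeries.mk fun n => ∑ ij ∈ Finset.HasAntidiagonal.antidiagonal n,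
              φ ij.1 (PowerSeries.coeff ij.2 y))) ∧
        Function.Bijective (fun x : PowerSeries (MvPolynomial (Fin 2) k) =>
          PowerSeries.mk fun n => ∑ ij ∈ Finset.HasAntidiagonal.antidiagonal n,
            φ ij.1 (PowerSeries.coeff ij.2 x)) :=
  trivial_deformation_example_general k θ₁ θ₂ hθ₁ hθ₂
end
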